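/- Let (f,g) ∈ C_2(I) and let μ be a Borel probability measure on [0,1]. Then for every fixed x ∈ I, the function m_x := m_{x;f,g;μ} is twice continuously differentiable in a neighborhood of 0 and satisfies m_x(0) = x, m_x'(0) = 0, and m_x''(0) = μ₂·Φ_{f,g}(x). -/

import Mathlib

open MeasureTheory Set

/-- The generalized quasiarithmetic mean `M_{f,g;μ}` on the interval `I`. -/
noncomputable def Mmean (I : Set ℝ) (f g : ℝ → ℝ) (μ : Measure ℝ) (x y : ℝ) : ℝ :=
  Function.invFunOn (fun t => f t / g t) I
    ((∫ t in Set.Icc (0:ℝ) 1, f (t * x + (1 - t) * y) ∂μ) /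
      (∫ t in Set.Icc (0:ℝ) 1, g (t * x + (1 - t) * y) ∂μ))

/-- First moment `μ̂₁` of a measure on `[0,1]`. -/
noncomputable def mom1 (μ : Measure ℝ) : ℝ := ∫ t in Set.Icc (0:ℝ) 1, t ∂μ

/-- `n`-th centralized moment `μ_n` of a measure on `[0,1]`. -/
noncomputable def cmom (μ : Measure ℝ) (n : ℕ) : ℝ :=
  ∫ t in Set.Icc (0:ℝ) 1, (t - mom1 μ) ^ n ∂μ

/-- The auxiliary function `m_{x;f,g;μ}`. -/
noncomputable def mfun (I : Set ℝ) (f g : ℝ → ℝ) (μ : Measure ℝ) (x : ℝ) : ℝ → ℝ :=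
  fun u => Mmean I f g μ (x + (1 - mom1 μ) * u) (x - mom1 μ * u)

/-- The `(i,j)`-order Wronskian `W^{i,j}_{f,g} = f⁽ⁱ⁾g⁽ʲ⁾ − f⁽ʲ⁾g⁽ⁱ⁾`. -/
noncomputable def Wr (i j : ℕ) (f g : ℝ → ℝ) : ℝ → ℝ :=
  fun x => iteratedDeriv i f x * iteratedDeriv j g x - iteratedDeriv j f x * iteratedDeriv i g x

/-- `Φ_{f,g} = W^{2,0}/W^{1,0}`. -/
noncomputable def Phi (f g : ℝ → ℝ) : ℝ → ℝ := fun x => Wr 2 0 f g x / Wr 1 0 f g x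

/-- `Ψ_{f,g} = −W^{2,1}/W^{1,0}`. -/
noncomputable def Psi (f g : ℝ → ℝ) : ℝ → ℝ := fun x => -(Wr 2 1 f g x / Wr 1 0 f g x)

/-- The class `𝒞_n(I)` for `n ≥ 1`. -/
def ClassC (n : ℕ) (I : Set ℝ) (f g : ℝ → ℝ) : Prop :=
  ContDiffOn ℝ n f I ∧ ContDiffOn ℝ n g I ∧ (∀ x ∈ I, 0 < g x) ∧
    ∀ x ∈ I, Wr 1 0 f g x ≠ 0

/-- The class `𝒞₀(I)`. -/
def ClassC0 (I : Set ℝ) (f g : ℝ → ℝ) : Prop :=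
  ContinuousOn f I ∧ ContinuousOn g I ∧ (∀ x ∈ I, 0 < g x) ∧
    (StrictMonoOn (fun x => f x / g x) I ∨ StrictAntiOn (fun x => f x / g x) I)

/-- Equivalence of pairs: `(f,g) ∼ (F,G)`. -/
def EquivPair (I : Set ℝ) (f g F G : ℝ → ℝ) : Prop :=
  ∃ a b c d : ℝ, a * d ≠ b * c ∧
    ∀ x ∈ I, F x = a * f x + b * g x ∧ G x = c * f x + d * g x

/-- Equality of two two-variable means near the diagonal of `I²`. -/
def EqualNearDiag (I : Set ℝ) (M N : ℝ → ℝ → ℝ) : Prop :=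
  ∃ U : Set (ℝ × ℝ), IsOpen U ∧ U ⊆ I ×ˢ I ∧
    I ⊆ closure {y | y ∈ I ∧ (y, y) ∈ U} ∧
    ∀ p ∈ U, M p.1 p.2 = N p.1 p.2

/-- The quasiarithmetic mean `A_φ`. -/
noncomputable def QAmean (I : Set ℝ) (φ : ℝ → ℝ) (x y : ℝ) : ℝ :=
  Function.invFunOn φ I ((φ x + φ y) / 2)

/-- The sine-type function `S_t`. -/
noncomputable def Sfun (t x : ℝ) : ℝ :=
  if t < 0 then Real.sin (Real.sqrt (-t) * x)
  else if t = 0 then x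
  else Real.sinh (Real.sqrt t * x)

/-- The cosine-type function `C_t`. -/
noncomputable def Cfun (t x : ℝ) : ℝ :=
  if t < 0 then Real.cos (Real.sqrt (-t) * x)
  else if t = 0 then 1
  else Real.cosh (Real.sqrt t * x)

/-- The real (sign-preserving) cube root. -/
noncomputable def cbrt (x : ℝ) : ℝ :=
  if x < 0 then -((-x) ^ ((1:ℝ)/3)) else x ^ ((1:ℝ)/3)

/-!
Since `t (x + (1 - μ̂₁) u) + (1 - t) (x - μ̂₁ u) = x + (t - μ̂₁) u`, we have
`m_x = (f/g)⁻¹ ∘ (F_f / F_g)` with `F_φ(u) = ∫ φ(x + (t - μ̂₁) u) dμ(t)`. Differentiating under the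
integral sign gives `F_φ⁽ʲ⁾(0) = μ_j φ⁽ʲ⁾(x)`, and `μ₀ = 1`, `μ₁ = 0`, so `N = F_f / F_g` satisfies
`N(0) = (f/g)(x)`, `N'(0) = 0` and `N''(0) = μ₂ W^{2,0}(x) / g(x)²`. As `(f/g)' = W^{1,0} / g²`
never vanishes, `f/g` is injective on the interval `I` and, by the inverse function theorem, its
inverse is `C²` near `(f/g)(x)`. The chain rule then gives `m_x'(0) = 0` and
`m_x''(0) = N''(0) / (f/g)'(x) = μ₂ Φ_{f,g}(x)`.
-/
open Filter Function Metric Topology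

theorem iteratedDeriv_two_div_of_deriv_eq_zero {F G : ℝ → ℝ} {a : ℝ} (hF : ContDiffAt ℝ 2 F a)
    (hG : ContDiffAt ℝ 2 G a) (hGa : G a ≠ 0) (hF' : deriv F a = 0) (hG' : deriv G a = 0) :
    iteratedDeriv 2 (fun u => F u / G u) a =
      (iteratedDeriv 2 F a * G a - F a * iteratedDeriv 2 G a) / G a ^ 2 := by
  have hinv2 : iteratedDeriv 2 G⁻¹ a = -iteratedDeriv 2 G a / G a ^ 2 := by
    rw [show G⁻¹ = Inv.inv ∘ G from rfl, iteratedDeriv_comp_two (contDiffAt_inv ℝ hGa) hG, hG',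
      deriv_inv]
    ring
  rw [show (fun u => F u / G u) = F * G⁻¹ from rfl, iteratedDeriv_mul hF (hG.inv hGa)]
  simp only [Finset.sum_range_succ, Finset.sum_range_zero, iteratedDeriv_zero, iteratedDeriv_one,
    hF', hinv2]
  norm_num
  field_simp
  ring

theorem deriv_div_of_deriv_eq_zero {F G : ℝ → ℝ} {a : ℝ} (hF : DifferentiableAt ℝ F a)
    (hG : DifferentiableAt ℝ G a) (hGa : G a ≠ 0) (hF' : deriv F a = 0) (hG' : deriv G a = 0) :
    deriv (fun u => F u / G u) a = 0 := by
  rw [deriv_fun_div hF hG hGa, hF', hG']; simp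

theorem Set.InjOn.invFunOn_eventuallyEq {α β : Type*} [TopologicalSpace α] [TopologicalSpace β]
    [Nonempty α] {h : α → β} {L : β → α} {s : Set α} {a : α} (hinj : InjOn h s) (hs : s ∈ 𝓝 a)
    (hL : Tendsto L (𝓝 (h a)) (𝓝 a)) (hright : ∀ᶠ y in 𝓝 (h a), h (L y) = y) :
    invFunOn h s =ᶠ[𝓝 (h a)] L := by
  filter_upwards [hright, hL hs] with y hy hLy
  have hex : ∃ z ∈ s, h z = y := ⟨L y, hLy, hy⟩
  exact hinj (invFunOn_mem hex) hLy ((invFunOn_eq hex).trans hy.symm)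

theorem contDiffAt_invFunOn {h : ℝ → ℝ} {s : Set ℝ} {a h' : ℝ} {n : WithTop ℕ∞}
    (hinj : InjOn h s) (hs : s ∈ 𝓝 a) (hh : ContDiffAt ℝ n h a) (hn : n ≠ 0)
    (hd : HasDerivAt h h' a) (hh' : h' ≠ 0) :
    ContDiffAt ℝ n (invFunOn h s) (h a) ∧ HasDerivAt (invFunOn h s) h'⁻¹ (h a) := by
  have hfd := hd.hasFDerivAt_equiv hh'
  set L := hh.localInverse hfd hn
  have hLa : L (h a) = a := hh.localInverse_apply_image hfd hn
  have hLsmooth : ContDiffAt ℝ n L (h a) := hh.to_localInverse hfd hn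
  have hright : ∀ᶠ y in 𝓝 (h a), h (L y) = y :=
    (hh.hasStrictFDerivAt' hfd hn).eventually_right_inverse
  have hLc := hLsmooth.continuousAt
  have hLt : Tendsto L (𝓝 (h a)) (𝓝 a) := by simpa only [hLa] using hLc.tendsto
  have heq := hinj.invFunOn_eventuallyEq hs hLt hright
  exact ⟨hLsmooth.congr_of_eventuallyEq heq,
    (HasDerivAt.of_local_left_inverse hLc (hLa.symm ▸ hd) hh' hright).congr_of_eventuallyEq heq⟩

theorem injOn_of_hasDerivAt_ne_zero {h h' : ℝ → ℝ} {s : Set ℝ} (hs : s.OrdConnected)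
    (hd : ∀ y ∈ s, HasDerivAt h (h' y) y) (hne : ∀ y ∈ s, h' y ≠ 0) : InjOn h s := by
  have key : ∀ a ∈ s, ∀ b ∈ s, a < b → h a ≠ h b := by
    intro a ha b hb hab heq
    have hsub : Icc a b ⊆ s := hs.out ha hb
    obtain ⟨c, hc, hc0⟩ := exists_hasDerivAt_eq_zero hab
      (fun y hy => (hd y (hsub hy)).continuousAt.continuousWithinAt) heq
      (fun y hy => hd y (hsub (Ioo_subset_Icc_self hy)))
    exact hne c (hsub (Ioo_subset_Icc_self hc)) hc0
  intro a ha b hb heq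
  by_contra hab
  rcases lt_or_gt_of_ne hab with hab | hab
  exacts [key a ha b hb hab heq, key b hb a ha hab heq.symm]

lemma exists_Icc_subset_of_isOpen {U : Set ℝ} {x : ℝ} (hU : IsOpen U) (hx : x ∈ U) :
    ∃ δ > 0, Icc (x - δ) (x + δ) ⊆ U := by
  obtain ⟨ε, hε, hball⟩ := Metric.isOpen_iff.1 hU x hx
  refine ⟨ε / 2, by positivity, ?_⟩
  rw [← Real.closedBall_eq_Icc]
  exact (closedBall_subset_ball (by linarith)).trans hball

noncomputable def momentIntegral (μ : Measure ℝ) (m x : ℝ) (k : ℕ) (φ : ℝ → ℝ) (u : ℝ) : ℝ :=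
  ∫ t in Icc (0:ℝ) 1, (t - m) ^ k * φ (x + (t - m) * u) ∂μ

lemma momentIntegral_apply_zero (μ : Measure ℝ) (m x : ℝ) (k : ℕ) (φ : ℝ → ℝ) :
    momentIntegral μ m x k φ 0 = (∫ t in Icc (0:ℝ) 1, (t - m) ^ k ∂μ) * φ x := by
  simp only [momentIntegral, mul_zero, add_zero]
  exact integral_mul_const _ _

section momentIntegral

variable {μ : Measure ℝ} [IsFiniteMeasure μ] {m x δ : ℝ} {U : Set ℝ} {φ : ℝ → ℝ}

lemma abs_sub_le_one_add_abs {t : ℝ} (ht : t ∈ Icc (0:ℝ) 1) (m : ℝ) : |t - m| ≤ 1 + |m| := by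
  have : |t| ≤ 1 := by rw [abs_of_nonneg ht.1]; exact ht.2
  linarith [abs_sub t m]

lemma add_sub_mul_mem_Icc {t u : ℝ} (ht : t ∈ Icc (0:ℝ) 1) (hu : |u| ≤ δ / (1 + |m|)) :
    x + (t - m) * u ∈ Icc (x - δ) (x + δ) := by
  have hbound : |(t - m) * u| ≤ δ :=
    calc |(t - m) * u| ≤ (1 + |m|) * (δ / (1 + |m|)) := by
          rw [abs_mul]
          exact mul_le_mul (abs_sub_le_one_add_abs ht m) hu (abs_nonneg _) (by positivity)
      _ = δ := mul_div_cancel₀ _ (by positivity)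
  obtain ⟨h₁, h₂⟩ := abs_le.1 hbound
  constructor <;> linarith

lemma continuousOn_momentIntegrand (hδU : Icc (x - δ) (x + δ) ⊆ U) (hφ : ContinuousOn φ U)
    (k : ℕ) {u : ℝ} (hu : |u| ≤ δ / (1 + |m|)) :
    ContinuousOn (fun t => (t - m) ^ k * φ (x + (t - m) * u)) (Icc 0 1) :=
  ((continuousOn_id.sub continuousOn_const).pow k).mul <|
    hφ.comp (by fun_prop) fun _ ht => hδU (add_sub_mul_mem_Icc ht hu)

lemma norm_momentIntegrand_le {C : ℝ} (hC : ∀ y ∈ Icc (x - δ) (x + δ), ‖φ y‖ ≤ C) (k : ℕ)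
    {t u : ℝ} (ht : t ∈ Icc (0:ℝ) 1) (hu : |u| ≤ δ / (1 + |m|)) :
    ‖(t - m) ^ k * φ (x + (t - m) * u)‖ ≤ (1 + |m|) ^ k * C := by
  rw [norm_mul, norm_pow, Real.norm_eq_abs]
  exact mul_le_mul (pow_le_pow_left₀ (abs_nonneg _) (abs_sub_le_one_add_abs ht m) k)
    (hC _ (add_sub_mul_mem_Icc ht hu)) (norm_nonneg _) (by positivity)

lemma abs_le_of_mem_ball_zero {u r : ℝ} (hu : u ∈ ball (0:ℝ) r) : |u| ≤ r :=
  (mem_ball_zero_iff.1 hu).le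

theorem continuousAt_momentIntegral (hU : IsOpen U) (hδU : Icc (x - δ) (x + δ) ⊆ U)
    (hφ : ContinuousOn φ U) (k : ℕ) {u₀ : ℝ} (hu₀ : u₀ ∈ ball (0:ℝ) (δ / (1 + |m|))) :
    ContinuousAt (momentIntegral μ m x k φ) u₀ := by
  obtain ⟨C, hC⟩ := isCompact_Icc.exists_bound_of_continuousOn (hφ.mono hδU)
  have hnhds := isOpen_ball.mem_nhds hu₀
  refine continuousAt_of_dominated (bound := fun _ => (1 + |m|) ^ k * C) ?_ ?_
    (integrable_const _) ?_
  · filter_upwards [hnhds] with u hu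
    exact (continuousOn_momentIntegrand hδU hφ k (abs_le_of_mem_ball_zero hu)).aestronglyMeasurable
      measurableSet_Icc
  · filter_upwards [hnhds] with u hu
    filter_upwards [ae_restrict_mem measurableSet_Icc] with t ht
    exact norm_momentIntegrand_le hC k ht (abs_le_of_mem_ball_zero hu)
  · filter_upwards [ae_restrict_mem measurableSet_Icc] with t ht
    have hy := hδU (add_sub_mul_mem_Icc ht (abs_le_of_mem_ball_zero hu₀))
    have hφy : ContinuousAt (fun u => φ (x + (t - m) * u)) u₀ :=
      (hφ.continuousAt (hU.mem_nhds hy)).comp (f := fun u => x + (t - m) * u) (by fun_prop)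
    exact continuousAt_const.mul hφy

theorem hasDerivAt_momentIntegral (hU : IsOpen U) (hδU : Icc (x - δ) (x + δ) ⊆ U)
    (hφ : ContDiffOn ℝ 1 φ U) (k : ℕ) {u₀ : ℝ} (hu₀ : u₀ ∈ ball (0:ℝ) (δ / (1 + |m|))) :
    HasDerivAt (momentIntegral μ m x k φ) (momentIntegral μ m x (k + 1) (deriv φ) u₀) u₀ := by
  have hφ' : ContinuousOn (deriv φ) U := hφ.continuousOn_deriv_of_isOpen hU le_rfl
  obtain ⟨C, hC⟩ := isCompact_Icc.exists_bound_of_continuousOn (hφ'.mono hδU)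
  have hnhds := isOpen_ball.mem_nhds hu₀
  have hu₀' := abs_le_of_mem_ball_zero hu₀
  refine (hasDerivAt_integral_of_dominated_loc_of_deriv_le hnhds
    (μ := μ.restrict (Icc 0 1)) (F := fun u t => (t - m) ^ k * φ (x + (t - m) * u))
    (F' := fun u t => (t - m) ^ (k + 1) * deriv φ (x + (t - m) * u))
    (bound := fun _ => (1 + |m|) ^ (k + 1) * C) ?_ ?_ ?_ ?_ (integrable_const _) ?_).2
  · filter_upwards [hnhds] with u hu
    exact (continuousOn_momentIntegrand hδU hφ.continuousOn k
      (abs_le_of_mem_ball_zero hu)).aestronglyMeasurable measurableSet_Icc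
  · exact (continuousOn_momentIntegrand hδU hφ.continuousOn k hu₀').integrableOn_compact
      isCompact_Icc
  · exact (continuousOn_momentIntegrand hδU hφ' (k + 1) hu₀').aestronglyMeasurable
      measurableSet_Icc
  · filter_upwards [ae_restrict_mem measurableSet_Icc] with t ht u hu
    exact norm_momentIntegrand_le hC (k + 1) ht (abs_le_of_mem_ball_zero hu)
  · filter_upwards [ae_restrict_mem measurableSet_Icc] with t ht u hu
    have hy := hδU (add_sub_mul_mem_Icc ht (abs_le_of_mem_ball_zero hu))
    have hφy : HasDerivAt φ (deriv φ _) _ :=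
      ((hφ.differentiableOn one_ne_zero _ hy).differentiableAt (hU.mem_nhds hy)).hasDerivAt
    exact ((hφy.comp u (((hasDerivAt_id u).const_mul (t - m)).const_add x)).const_mul
      ((t - m) ^ k)).congr_deriv (by ring)

theorem contDiffOn_momentIntegral (hU : IsOpen U) (hδU : Icc (x - δ) (x + δ) ⊆ U) {n : ℕ}
    (hφ : ContDiffOn ℝ n φ U) (k : ℕ) :
    ContDiffOn ℝ n (momentIntegral μ m x k φ) (ball 0 (δ / (1 + |m|))) := by
  induction n generalizing k φ with
  | zero =>
    exact contDiffOn_zero.2 fun u hu =>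
      (continuousAt_momentIntegral hU hδU hφ.continuousOn k hu).continuousWithinAt
  | succ n ih =>
    have hd : ∀ u ∈ ball (0:ℝ) (δ / (1 + |m|)), HasDerivAt (momentIntegral μ m x k φ)
        (momentIntegral μ m x (k + 1) (deriv φ) u) u :=
      fun u hu => hasDerivAt_momentIntegral hU hδU (hφ.of_le (by simp)) k hu
    rw [Nat.cast_succ, contDiffOn_succ_iff_deriv_of_isOpen isOpen_ball]
    refine ⟨fun u hu => (hd u hu).differentiableAt.differentiableWithinAt, by simp, ?_⟩
    exact (ih (hφ.deriv_of_isOpen hU (by simp)) (k + 1)).congr fun u hu => (hd u hu).deriv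

theorem iteratedDeriv_momentIntegral (hU : IsOpen U) (hδU : Icc (x - δ) (x + δ) ⊆ U) {n : ℕ}
    (hφ : ContDiffOn ℝ n φ U) (k : ℕ) {u : ℝ} (hu : u ∈ ball (0:ℝ) (δ / (1 + |m|))) :
    iteratedDeriv n (momentIntegral μ m x k φ) u =
      momentIntegral μ m x (k + n) (iteratedDeriv n φ) u := by
  induction n generalizing k φ u with
  | zero => simp
  | succ n ih =>
    have hderiv : deriv (momentIntegral μ m x k φ) =ᶠ[𝓝 u]
        momentIntegral μ m x (k + 1) (deriv φ) :=
      eventually_of_mem (isOpen_ball.mem_nhds hu) fun v hv =>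
        (hasDerivAt_momentIntegral hU hδU (hφ.of_le (by simp)) k hv).deriv
    rw [iteratedDeriv_succ', hderiv.iteratedDeriv_eq,
      ih (hφ.deriv_of_isOpen hU (by simp)) (k + 1) hu, ← iteratedDeriv_succ', add_right_comm,
      add_assoc]

end momentIntegral

section momentIntegralAtZero

variable {μ : Measure ℝ} [IsFiniteMeasure μ] {m x : ℝ} {U : Set ℝ} {φ : ℝ → ℝ}

theorem contDiffAt_momentIntegral_zero (hU : IsOpen U) (hx : x ∈ U) {n : ℕ}
    (hφ : ContDiffOn ℝ n φ U) (k : ℕ) : ContDiffAt ℝ n (momentIntegral μ m x k φ) 0 := by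
  obtain ⟨δ, hδ, hδU⟩ := exists_Icc_subset_of_isOpen hU hx
  exact (contDiffOn_momentIntegral hU hδU hφ k).contDiffAt
    (isOpen_ball.mem_nhds (mem_ball_self (by positivity)))

theorem iteratedDeriv_momentIntegral_zero (hU : IsOpen U) (hx : x ∈ U) {n : ℕ}
    (hφ : ContDiffOn ℝ n φ U) (k : ℕ) :
    iteratedDeriv n (momentIntegral μ m x k φ) 0 =
      (∫ t in Icc (0:ℝ) 1, (t - m) ^ (k + n) ∂μ) * iteratedDeriv n φ x := by
  obtain ⟨δ, hδ, hδU⟩ := exists_Icc_subset_of_isOpen hU hx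
  rw [iteratedDeriv_momentIntegral hU hδU hφ k (mem_ball_self (by positivity)),
    momentIntegral_apply_zero]

theorem iteratedDeriv_momentIntegral_mom1_zero (hU : IsOpen U) (hx : x ∈ U) {n : ℕ}
    (hφ : ContDiffOn ℝ n φ U) :
    iteratedDeriv n (momentIntegral μ (mom1 μ) x 0 φ) 0 = cmom μ n * iteratedDeriv n φ x := by
  rw [iteratedDeriv_momentIntegral_zero hU hx hφ, zero_add, cmom]

end momentIntegralAtZero

section ProbabilityOnUnitInterval

variable {μ : Measure ℝ} [IsProbabilityMeasure μ]

lemma cmom_zero (hsupp : μ (Icc (0:ℝ) 1)ᶜ = 0) : cmom μ 0 = 1 := by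
  have h1 : μ (Icc (0:ℝ) 1) = 1 := (prob_compl_eq_zero_iff measurableSet_Icc).1 hsupp
  simp [cmom, Measure.real, h1]

lemma cmom_one (hsupp : μ (Icc (0:ℝ) 1)ᶜ = 0) : cmom μ 1 = 0 := by
  have h1 : μ (Icc (0:ℝ) 1) = 1 := (prob_compl_eq_zero_iff measurableSet_Icc).1 hsupp
  simp only [cmom, pow_one]
  rw [integral_sub (continuous_id' (X := ℝ)).integrableOn_Icc (integrable_const _), setIntegral_const]
  simp [mom1, Measure.real, h1]

variable {x : ℝ} {U : Set ℝ} {φ : ℝ → ℝ}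

lemma momentIntegral_mom1_apply_zero (hsupp : μ (Icc (0:ℝ) 1)ᶜ = 0) :
    momentIntegral μ (mom1 μ) x 0 φ 0 = φ x := by
  rw [momentIntegral_apply_zero, ← cmom, cmom_zero hsupp, one_mul]

lemma deriv_momentIntegral_mom1_zero (hsupp : μ (Icc (0:ℝ) 1)ᶜ = 0) (hU : IsOpen U) (hx : x ∈ U)
    (hφ : ContDiffOn ℝ 1 φ U) : deriv (momentIntegral μ (mom1 μ) x 0 φ) 0 = 0 := by
  have := iteratedDeriv_momentIntegral_mom1_zero (μ := μ) hU hx (n := 1) (by exact_mod_cast hφ)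
  rwa [iteratedDeriv_one, cmom_one hsupp, zero_mul] at this

end ProbabilityOnUnitInterval

noncomputable def momentRatio (μ : Measure ℝ) (x : ℝ) (f g : ℝ → ℝ) (u : ℝ) : ℝ :=
  momentIntegral μ (mom1 μ) x 0 f u / momentIntegral μ (mom1 μ) x 0 g u

lemma mfun_eq_invFunOn_comp_momentRatio (I : Set ℝ) (f g : ℝ → ℝ) (μ : Measure ℝ) (x : ℝ) :
    mfun I f g μ x = invFunOn (fun y => f y / g y) I ∘ momentRatio μ x f g := by
  funext u
  have harg : ∀ t, t * (x + (1 - mom1 μ) * u) + (1 - t) * (x - mom1 μ * u) =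
      x + (t - mom1 μ) * u := fun t => by ring
  simp only [mfun, Mmean, momentRatio, momentIntegral, harg, pow_zero, one_mul, comp_apply]

lemma Wr_two_zero (f g : ℝ → ℝ) (y : ℝ) :
    Wr 2 0 f g y = iteratedDeriv 2 f y * g y - f y * iteratedDeriv 2 g y := by
  simp [Wr]

section momentRatio

variable {μ : Measure ℝ} [IsProbabilityMeasure μ] {x : ℝ} {U : Set ℝ} {f g : ℝ → ℝ}

lemma momentRatio_zero (hsupp : μ (Icc (0:ℝ) 1)ᶜ = 0) : momentRatio μ x f g 0 = f x / g x := by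
  rw [momentRatio, momentIntegral_mom1_apply_zero hsupp, momentIntegral_mom1_apply_zero hsupp]

lemma contDiffAt_momentRatio (hsupp : μ (Icc (0:ℝ) 1)ᶜ = 0) (hU : IsOpen U) (hx : x ∈ U)
    (hf : ContDiffOn ℝ 2 f U) (hg : ContDiffOn ℝ 2 g U) (hgx : g x ≠ 0) :
    ContDiffAt ℝ 2 (momentRatio μ x f g) 0 :=
  (contDiffAt_momentIntegral_zero hU hx hf 0).div (contDiffAt_momentIntegral_zero hU hx hg 0)
    (by rwa [momentIntegral_mom1_apply_zero hsupp])

lemma deriv_momentRatio_zero (hsupp : μ (Icc (0:ℝ) 1)ᶜ = 0) (hU : IsOpen U) (hx : x ∈ U)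
    (hf : ContDiffOn ℝ 2 f U) (hg : ContDiffOn ℝ 2 g U) (hgx : g x ≠ 0) :
    deriv (momentRatio μ x f g) 0 = 0 :=
  deriv_div_of_deriv_eq_zero
    ((contDiffAt_momentIntegral_zero hU hx hf 0).differentiableAt two_ne_zero)
    ((contDiffAt_momentIntegral_zero hU hx hg 0).differentiableAt two_ne_zero)
    (by rwa [momentIntegral_mom1_apply_zero hsupp])
    (deriv_momentIntegral_mom1_zero hsupp hU hx (hf.of_le one_le_two))
    (deriv_momentIntegral_mom1_zero hsupp hU hx (hg.of_le one_le_two))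

lemma iteratedDeriv_two_momentRatio_zero (hsupp : μ (Icc (0:ℝ) 1)ᶜ = 0) (hU : IsOpen U)
    (hx : x ∈ U) (hf : ContDiffOn ℝ 2 f U) (hg : ContDiffOn ℝ 2 g U) (hgx : g x ≠ 0) :
    iteratedDeriv 2 (momentRatio μ x f g) 0 = cmom μ 2 * Wr 2 0 f g x / g x ^ 2 := by
  rw [show momentRatio μ x f g = fun u => momentIntegral μ (mom1 μ) x 0 f u /
      momentIntegral μ (mom1 μ) x 0 g u from rfl,
    iteratedDeriv_two_div_of_deriv_eq_zero (contDiffAt_momentIntegral_zero hU hx hf 0)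
      (contDiffAt_momentIntegral_zero hU hx hg 0) (by rwa [momentIntegral_mom1_apply_zero hsupp])
      (deriv_momentIntegral_mom1_zero hsupp hU hx (hf.of_le one_le_two))
      (deriv_momentIntegral_mom1_zero hsupp hU hx (hg.of_le one_le_two)),
    iteratedDeriv_momentIntegral_mom1_zero hU hx hf, iteratedDeriv_momentIntegral_mom1_zero hU hx hg,
    momentIntegral_mom1_apply_zero hsupp, momentIntegral_mom1_apply_zero hsupp, Wr_two_zero]
  ring

end momentRatio

section ClassC

variable {I : Set ℝ} {f g : ℝ → ℝ} {n : ℕ}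

lemma ClassC.hasDerivAt_div (hfg : ClassC n I f g) (hn : 1 ≤ n) (hI : IsOpen I) {y : ℝ}
    (hy : y ∈ I) : HasDerivAt (fun z => f z / g z) (Wr 1 0 f g y / g y ^ 2) y := by
  have hn' : (n : WithTop ℕ∞) ≠ 0 := by exact_mod_cast (by omega : n ≠ 0)
  have hf := (hfg.1.differentiableOn hn' y hy).differentiableAt (hI.mem_nhds hy)
  have hg := (hfg.2.1.differentiableOn hn' y hy).differentiableAt (hI.mem_nhds hy)
  simpa [Wr] using hf.hasDerivAt.fun_div hg.hasDerivAt (hfg.2.2.1 y hy).ne'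

lemma ClassC.Wr_div_sq_ne_zero (hfg : ClassC n I f g) {y : ℝ} (hy : y ∈ I) :
    Wr 1 0 f g y / g y ^ 2 ≠ 0 :=
  div_ne_zero (hfg.2.2.2 y hy) (pow_ne_zero 2 (hfg.2.2.1 y hy).ne')

lemma ClassC.injOn_div (hfg : ClassC n I f g) (hn : 1 ≤ n) (hI : IsOpen I)
    (hIconn : I.OrdConnected) : InjOn (fun y => f y / g y) I :=
  injOn_of_hasDerivAt_ne_zero hIconn (fun _ hy => hfg.hasDerivAt_div hn hI hy)
    fun _ hy => hfg.Wr_div_sq_ne_zero hy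

lemma ClassC.contDiffAt_invFunOn_div (hfg : ClassC n I f g) (hn : 1 ≤ n) (hI : IsOpen I)
    (hIconn : I.OrdConnected) {x : ℝ} (hx : x ∈ I) :
    ContDiffAt ℝ n (invFunOn (fun y => f y / g y) I) (f x / g x) ∧
      HasDerivAt (invFunOn (fun y => f y / g y) I) (Wr 1 0 f g x / g x ^ 2)⁻¹ (f x / g x) :=
  contDiffAt_invFunOn (hfg.injOn_div hn hI hIconn) (hI.mem_nhds hx)
    ((hfg.1.contDiffAt (hI.mem_nhds hx)).div (hfg.2.1.contDiffAt (hI.mem_nhds hx))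
      (hfg.2.2.1 x hx).ne') (by exact_mod_cast (by omega : n ≠ 0))
    (hfg.hasDerivAt_div hn hI hx) (hfg.Wr_div_sq_ne_zero hx)

end ClassC

theorem statement11_general (I : Set ℝ) (hIopen : IsOpen I)
    (hIconn : I.OrdConnected)
    (f g : ℝ → ℝ) (hfg : ClassC 2 I f g)
    (μ : Measure ℝ) [IsProbabilityMeasure μ] (hsupp : μ (Set.Icc (0:ℝ) 1)ᶜ = 0) :
    ∀ x ∈ I,
      ContDiffAt ℝ 2 (mfun I f g μ x) 0 ∧
      mfun I f g μ x 0 = x ∧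
      deriv (mfun I f g μ x) 0 = 0 ∧
      iteratedDeriv 2 (mfun I f g μ x) 0 = cmom μ 2 * Phi f g x := by
  intro x hx
  have hgx : g x ≠ 0 := (hfg.2.2.1 x hx).ne'
  have hN := contDiffAt_momentRatio hsupp hIopen hx hfg.1 hfg.2.1 hgx
  have hN0 : momentRatio μ x f g 0 = f x / g x := momentRatio_zero hsupp
  have hN' := deriv_momentRatio_zero hsupp hIopen hx hfg.1 hfg.2.1 hgx
  have hN'' := iteratedDeriv_two_momentRatio_zero hsupp hIopen hx hfg.1 hfg.2.1 hgx
  obtain ⟨hL, hL'⟩ := hfg.contDiffAt_invFunOn_div one_le_two hIopen hIconn hx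
  rw [← hN0] at hL hL'
  rw [mfun_eq_invFunOn_comp_momentRatio]
  refine ⟨hL.comp 0 hN, ?_, ?_, ?_⟩
  · rw [comp_apply, hN0]
    exact (hfg.injOn_div one_le_two hIopen hIconn).leftInvOn_invFunOn hx
  · rw [(hL'.comp 0 (hN.differentiableAt two_ne_zero).hasDerivAt).deriv, hN', mul_zero]
  · rw [iteratedDeriv_comp_two hL hN, hN', hL'.deriv, hN'', Phi]
    field_simp
    ring

/-- The second derivative of `m_x` at the origin. -/
theorem statement11 (I : Set ℝ) (hIopen : IsOpen I) (hIne : I.Nonempty)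
    (hIconn : I.OrdConnected)
    (f g : ℝ → ℝ) (hfg : ClassC 2 I f g)
    (μ : Measure ℝ) [IsProbabilityMeasure μ] (hsupp : μ (Set.Icc (0:ℝ) 1)ᶜ = 0) :
    ∀ x ∈ I,
      ContDiffAt ℝ 2 (mfun I f g μ x) 0 ∧
      mfun I f g μ x 0 = x ∧
      deriv (mfun I f g μ x) 0 = 0 ∧
      iteratedDeriv 2 (mfun I f g μ x) 0 = cmom μ 2 * Phi f g x :=
  statement11_general I hIopen hIconn f g hfg μ hsupp
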